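/- If f: U → V is a proper monomorphism of representations of (P,θ), then setting W₀ = coker(f: U₀ → V₀) with quotient map g, and W_z = g^z(V_z) for each z ∈ θ, the pair (W₀, W_z)_{z∈θ} is a representation of (P,θ), and for each z the sequence 0 → U_z → V_z → W_z → 0 is exact. -/

import Mathlib

open scoped Classical

/-! ## Posets with involution and their vector-space representations -/

structure PosetInv (P : Type) [PartialOrder P] where
  σ : P → P
  invol : ∀ x, σ (σ x) = x

namespace PosetInv

variable {P : Type} [PartialOrder P]

/-- The equivalence relation whose classes are `{x, σ x}`. -/
def r (I : PosetInv P) (x y : P) : Prop := y = x ∨ y = I.σ x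

theorem r_refl (I : PosetInv P) (x : P) : I.r x x := Or.inl rfl

theorem r_symm (I : PosetInv P) {x y : P} (h : I.r x y) : I.r y x := by
  rcases h with rfl | rfl
  · exact Or.inl rfl
  · exact Or.inr (I.invol x).symm

theorem r_trans (I : PosetInv P) {x y z : P} (h1 : I.r x y) (h2 : I.r y z) : I.r x z := by
  rcases h1 with rfl | rfl
  · exact h2
  · rcases h2 with rfl | rfl
    · exact Or.inr rfl
    · rw [I.invol]; exact Or.inl rfl

def setoid (I : PosetInv P) : Setoid P := ⟨I.r, ⟨I.r_refl, I.r_symm, I.r_trans⟩⟩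

/-- The set `θ` of equivalence classes. -/
def Classes (I : PosetInv P) : Type := Quotient I.setoid

/-- The class `[x]` of an element. -/
def cls (I : PosetInv P) (x : P) : I.Classes := Quotient.mk I.setoid x

/-- The underlying set of elements of a class. -/
def carrier (I : PosetInv P) : I.Classes → Set P :=
  Quotient.lift (fun x => {y | I.r x y}) (by
    intro a b hab
    ext y
    constructor
    · intro h; exact I.r_trans (I.r_symm hab) h
    · intro h; exact I.r_trans hab h)

theorem mem_cls (I : PosetInv P) (x : P) : x ∈ I.carrier (I.cls x) := I.r_refl x

theorem sigma_mem_cls (I : PosetInv P) (x : P) : I.σ x ∈ I.carrier (I.cls x) := Or.inr rfl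

end PosetInv

open PosetInv

/-- A vector-space representation `V = (V₀, V_z)_{z ∈ θ}` of the poset with involution
`(P, θ)`:  a finite-dimensional space `V₀` together with, for each class `z`, a subspace
`V_z ⊆ V₀^z` (functions on the class), satisfying `V_y⁺ ⊆ V_x⁻` for `y < x`. -/
structure RepI (k : Type) [Field k] {P : Type} [PartialOrder P] (I : PosetInv P) where
  V0 : Type
  [acg : AddCommGroup V0]
  [mod : Module k V0]
  [fd : FiniteDimensional k V0]
  Vz : ∀ z : I.Classes, Submodule k (↥(I.carrier z) → V0)
  compat : ∀ ⦃x y : P⦄, y < x → ∀ h ∈ Vz (I.cls y),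
    (fun w : ↥(I.carrier (I.cls x)) => if (w : P) = x then h ⟨y, I.mem_cls y⟩ else 0)
      ∈ Vz (I.cls x)

attribute [instance] RepI.acg RepI.mod RepI.fd

variable {k : Type} [Field k] {P : Type} [PartialOrder P] {I : PosetInv P}

/-- A morphism of representations:  a linear map `φ : V₀ → W₀` with `φ^z(V_z) ⊆ W_z`. -/
@[ext]
structure Hom (V W : RepI k I) where
  φ : V.V0 →ₗ[k] W.V0
  maps : ∀ z, ∀ h ∈ V.Vz z, (fun w => φ (h w)) ∈ W.Vz z

namespace Hom

def comp {U V W : RepI k I} (g : Hom V W) (f : Hom U V) : Hom U W :=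
  ⟨g.φ ∘ₗ f.φ, fun z h hh => g.maps z _ (f.maps z h hh)⟩

def idH (V : RepI k I) : Hom V V := ⟨LinearMap.id, fun _ _ hh => hh⟩

def zeroH (V W : RepI k I) : Hom V W :=
  ⟨0, fun z _ _ => (W.Vz z).zero_mem⟩

end Hom

/-- `f` is a proper epimorphism:  surjective on `V₀` and on each `V_z`. -/
def ProperEpi {V W : RepI k I} (f : Hom V W) : Prop :=
  Function.Surjective f.φ ∧
    ∀ z, ∀ g ∈ W.Vz z, ∃ h ∈ V.Vz z, (fun w => f.φ (h w)) = g

/-- `f` is a proper monomorphism:  injective on `U₀`, and the elements of `V_z` all of whose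
coordinates lie in the image of `f` are exactly the images of elements of `U_z`. -/
def ProperMono {U V : RepI k I} (f : Hom U V) : Prop :=
  Function.Injective f.φ ∧
    ∀ z, ∀ h ∈ V.Vz z, (∀ w, h w ∈ LinearMap.range f.φ) →
      ∃ g ∈ U.Vz z, (fun w => f.φ (g w)) = h

/-- `(u, v)` is an `ε`-sequence:  `0 → U₀ → V₀ → W₀ → 0` and each
`0 → U_z → V_z → W_z → 0` is exact. -/
def IsEpsSeq {U V W : RepI k I} (u : Hom U V) (v : Hom V W) : Prop :=
  Function.Injective u.φ ∧ Function.Surjective v.φ ∧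
    LinearMap.range u.φ = LinearMap.ker v.φ ∧
    ∀ z, (∀ h ∈ W.Vz z, ∃ g ∈ V.Vz z, (fun w => v.φ (g w)) = h) ∧
      (∀ g ∈ V.Vz z, (fun w => v.φ (g w)) = 0 →
        ∃ p ∈ U.Vz z, (fun w => u.φ (p w)) = g)

/-! Everything happens coordinatewise. The compatibility condition for `W` is the image under
`g` of the one for `V`, and exactness at `V_z` is precisely properness of `f`: an `h ∈ V_z`
killed by `g` has all its coordinates in `ker g = im f`. -/

def IsCompatible {M : Type} [AddCommGroup M] [Module k M]
    (Vz : ∀ z : I.Classes, Submodule k (↥(I.carrier z) → M)) : Prop :=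
  ∀ ⦃x y : P⦄, y < x → ∀ h ∈ Vz (I.cls y),
    (fun w : ↥(I.carrier (I.cls x)) => if (w : P) = x then h ⟨y, I.mem_cls y⟩ else 0)
      ∈ Vz (I.cls x)

theorem IsCompatible.map {M N : Type} [AddCommGroup M] [Module k M] [AddCommGroup N]
    [Module k N] {Vz : ∀ z : I.Classes, Submodule k (↥(I.carrier z) → M)}
    (hV : IsCompatible Vz) (g : M →ₗ[k] N) :
    IsCompatible fun z => (Vz z).map (LinearMap.compLeft g (I.carrier z)) := by
  rintro x y hxy _ ⟨h, hh, rfl⟩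
  refine ⟨_, hV hxy h hh, funext fun w => ?_⟩
  by_cases hw : (w : P) = x <;> simp [hw]

theorem ProperMono.exists_eq_of_comp_eq_zero {U V : RepI k I} {f : Hom U V}
    (hf : ProperMono f) {Q : Type} [AddCommGroup Q] [Module k Q] {g : V.V0 →ₗ[k] Q}
    (hfg : Function.Exact f.φ g) {z : I.Classes} {h : ↥(I.carrier z) → V.V0}
    (hh : h ∈ V.Vz z) (hgh : (fun w => g (h w)) = 0) :
    ∃ p ∈ U.Vz z, (fun w => f.φ (p w)) = h :=
  hf.2 z h hh fun w => (hfg _).mp (congrFun hgh w)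

theorem cokernel_is_representation_and_exact
    {k : Type} [Field k] {P : Type} [PartialOrder P] {I : PosetInv P}
    {U V : RepI k I} (f : Hom U V) (hf : ProperMono f) :
    -- the quotient space, the quotient map, and the image subspaces `W_z`
    ∀ (Q : Type) (_ : AddCommGroup Q), ∀ _ : Module k Q, ∀ g : V.V0 →ₗ[k] Q,
      Function.Surjective g → LinearMap.ker g = LinearMap.range f.φ →
      ∀ Wz : ∀ z : I.Classes, Submodule k (↥(I.carrier z) → Q),
      (∀ z, Wz z = Submodule.map (LinearMap.compLeft g ↥(I.carrier z)) (V.Vz z)) →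
      -- (1) `(W₀, W_z)` is a representation:
      ((∀ ⦃x y : P⦄, y < x → ∀ h ∈ Wz (I.cls y),
          (fun w : ↥(I.carrier (I.cls x)) => if (w : P) = x then h ⟨y, I.mem_cls y⟩ else 0)
            ∈ Wz (I.cls x)) ∧
      -- (2) `0 → U_z → V_z → W_z → 0` is exact for every `z`:
        (∀ z : I.Classes,
          -- injectivity of `f^z` on `U_z`
          (∀ p ∈ U.Vz z, (fun w => f.φ (p w)) = 0 → p = 0) ∧
          -- exactness at `V_z`
          (∀ h ∈ V.Vz z, (fun w => g (h w)) = 0 →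
            ∃ p ∈ U.Vz z, (fun w => f.φ (p w)) = h) ∧
          -- exactness of the composite and surjectivity of `g^z : V_z → W_z`
          (∀ p ∈ U.Vz z, (fun w => g (f.φ (p w))) = 0) ∧
          (∀ q ∈ Wz z, ∃ h ∈ V.Vz z, (fun w => g (h w)) = q))) := by
  intro Q _ _ g _ hker Wz hW
  obtain rfl : Wz = fun z => (V.Vz z).map (LinearMap.compLeft g (I.carrier z)) := funext hW
  have hfg : Function.Exact f.φ g := LinearMap.exact_iff.mpr hker
  refine ⟨IsCompatible.map V.compat g, fun z => ⟨?_, ?_, ?_, ?_⟩⟩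
  · intro p _ hp
    exact hf.1.comp_left (hp.trans (funext fun _ => (map_zero f.φ).symm))
  · intro h hh hgh
    exact hf.exists_eq_of_comp_eq_zero hfg hh hgh
  · intro p _
    exact funext fun w => hfg.apply_apply_eq_zero (p w)
  · rintro _ ⟨h, hh, rfl⟩
    exact ⟨h, hh, rfl⟩
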